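/- Let E be a finite-dimensional real vector space and let K₁, K₂ ⊆ E be convex cones (closed under nonnegative scalar multiplication). If K₁ and K₂ are transverse, i.e. K₁ - K₂ = {k₁ - k₂ : k₁ ∈ K₁, k₂ ∈ K₂} = E, then either K₁ and K₂ are strongly transverse (i.e. transverse and K₁ ∩ K₂ contains a nonzero vector), or K₁ and K₂ are both linear subspaces with K₁ ⊕ K₂ = E. -/
import Mathlib


/-- A transverse pair of convex cones in a finite-dimensional real vector
space is either strongly transverse, or the cones are complementary linear subspaces. -/
theorem stmt_0 {E : Type*} [AddCommGroup E] [Module ℝ E] [FiniteDimensional ℝ E]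
    (K₁ K₂ : Set E)
    (hconv₁ : Convex ℝ K₁) (hconv₂ : Convex ℝ K₂)
    (hcone₁ : ∀ α : ℝ, 0 ≤ α → ∀ k ∈ K₁, α • k ∈ K₁)
    (hcone₂ : ∀ α : ℝ, 0 ≤ α → ∀ k ∈ K₂, α • k ∈ K₂)
    (htrans : {x : E | ∃ k₁ ∈ K₁, ∃ k₂ ∈ K₂, x = k₁ - k₂} = Set.univ) :
    (({x : E | ∃ k₁ ∈ K₁, ∃ k₂ ∈ K₂, x = k₁ - k₂} = Set.univ) ∧
      ∃ x : E, x ≠ 0 ∧ x ∈ K₁ ∩ K₂) ∨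
    (∃ p q : Submodule ℝ E, (p : Set E) = K₁ ∧ (q : Set E) = K₂ ∧ IsCompl p q) := by
  by_cases hstr : ∃ x : E, x ≠ 0 ∧ x ∈ K₁ ∩ K₂
  · exact Or.inl ⟨htrans, hstr⟩
  push_neg at hstr
  -- so K₁ ∩ K₂ ⊆ {0}
  have hzero : ∀ x, x ∈ K₁ → x ∈ K₂ → x = 0 := by
    intro x h1 h2
    by_contra h
    exact (hstr x h) ⟨h1, h2⟩
  -- decompose any x
  have hdec : ∀ x : E, ∃ k₁ ∈ K₁, ∃ k₂ ∈ K₂, x = k₁ - k₂ := by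
    intro x
    have : x ∈ {x : E | ∃ k₁ ∈ K₁, ∃ k₂ ∈ K₂, x = k₁ - k₂} := by
      rw [htrans]; trivial
    exact this
  obtain ⟨a, ha, b, hb, _⟩ := hdec 0
  have h01 : (0 : E) ∈ K₁ := by simpa using hcone₁ 0 le_rfl a ha
  have h02 : (0 : E) ∈ K₂ := by simpa using hcone₂ 0 le_rfl b hb
  -- closure under addition
  have hadd₁ : ∀ x ∈ K₁, ∀ y ∈ K₁, x + y ∈ K₁ := by
    intro x hx y hy
    have hm := hconv₁ hx hy (by norm_num : (0:ℝ) ≤ 1/2) (by norm_num : (0:ℝ) ≤ 1/2)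
      (by norm_num)
    have := hcone₁ 2 (by norm_num) _ hm
    simpa [smul_smul, smul_add] using this
  have hadd₂ : ∀ x ∈ K₂, ∀ y ∈ K₂, x + y ∈ K₂ := by
    intro x hx y hy
    have hm := hconv₂ hx hy (by norm_num : (0:ℝ) ≤ 1/2) (by norm_num : (0:ℝ) ≤ 1/2)
      (by norm_num)
    have := hcone₂ 2 (by norm_num) _ hm
    simpa [smul_smul, smul_add] using this
  -- closure under negation
  have hneg₁ : ∀ x ∈ K₁, -x ∈ K₁ := by
    intro x hx
    obtain ⟨a, ha, b, hb, hab⟩ := hdec (-x)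
    have hxa : x + a ∈ K₁ := hadd₁ x hx a ha
    have hxab : x + a = b := by
      have h' : a - b = -x := hab.symm
      rw [sub_eq_iff_eq_add] at h'
      rw [h']; abel
    have h0 : x + a = 0 := hzero _ hxa (hxab ▸ hb)
    have : a = -x := eq_neg_of_add_eq_zero_right h0
    exact this ▸ ha
  have hneg₂ : ∀ x ∈ K₂, -x ∈ K₂ := by
    intro x hx
    obtain ⟨a, ha, b, hb, hab⟩ := hdec x
    have hbx : x + b ∈ K₂ := hadd₂ x hx b hb
    have hxab : x + b = a := by rw [hab]; abel
    have ha0 : x + b = 0 := hzero _ (hxab ▸ ha) hbx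
    have : b = -x := eq_neg_of_add_eq_zero_right ha0
    exact this ▸ hb
  -- build submodules
  have smul₁ : ∀ (c : ℝ), ∀ x ∈ K₁, c • x ∈ K₁ := by
    intro c x hx
    rcases le_or_gt 0 c with h | h
    · exact hcone₁ c h x hx
    · have : c • x = (-c) • (-x) := by simp
      rw [this]
      exact hcone₁ (-c) (by linarith) _ (hneg₁ x hx)
  have smul₂ : ∀ (c : ℝ), ∀ x ∈ K₂, c • x ∈ K₂ := by
    intro c x hx
    rcases le_or_gt 0 c with h | h
    · exact hcone₂ c h x hx
    · have : c • x = (-c) • (-x) := by simp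
      rw [this]
      exact hcone₂ (-c) (by linarith) _ (hneg₂ x hx)
  let p : Submodule ℝ E :=
    { carrier := K₁
      add_mem' := fun hx hy => hadd₁ _ hx _ hy
      zero_mem' := h01
      smul_mem' := fun c x hx => smul₁ c x hx }
  let q : Submodule ℝ E :=
    { carrier := K₂
      add_mem' := fun hx hy => hadd₂ _ hx _ hy
      zero_mem' := h02
      smul_mem' := fun c x hx => smul₂ c x hx }
  refine Or.inr ⟨p, q, rfl, rfl, ?_, ?_⟩
  · -- disjoint
    rw [Submodule.disjoint_def]
    intro x hx hy
    exact hzero x hx hy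
  · -- codisjoint
    rw [codisjoint_iff, eq_top_iff]
    intro x _
    obtain ⟨a, ha, b, hb, hab⟩ := hdec x
    have : x = a + (-b) := by rw [hab]; abel
    rw [this]
    exact Submodule.add_mem_sup ha (hneg₂ b hb)
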